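/- arXiv:math/0508041 — 4 statements merged into one kernel-verified Lean document; each statement's English description precedes it below -/
import Mathlib

section
/- Let P be a finite poset on [n], and for σ ∈ S_n let A(σ) be the set of maps f: [n] → X (X a totally ordered set) with f(σ(1)) ≤ ⋯ ≤ f(σ(n)) and f(σ(s)) < f(σ(s+1)) whenever σ(s) > σ(s+1). Then the set A(P) of all P-partitions is the disjoint union of A(σ) over all linear extensions σ of P, where a P-partition is an order-preserving map f: [n] → X satisfying f(i) ≤ f(j) if i <_P j and f(i) < f(j) if i <_P j and i > j as integers. -/
/-!
Tag each `i` with the pair `(f i, i)` in the lexicographic order on `X ×ₗ Fin n`. For `i ≠ j`,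
the condition "`f i ≤ f j`, strictly if `j < i`" says exactly that the tag of `i` is below the
tag of `j`. Hence `f ∈ A σ` means that `σ` lists the tags in increasing order, i.e. `σ` is the
sorting permutation `Tuple.sort f`, and `f` is a `P`-partition iff the tags increase along `P`,
i.e. iff `Tuple.sort f` is a linear extension of `P`.
-/

lemma toLex_lt_toLex_iff_of_ne {ι X : Type*} [LinearOrder ι] [LinearOrder X]
    {x y : X} {a b : ι} (hab : a ≠ b) :
    toLex (x, a) < toLex (y, b) ↔ x ≤ y ∧ (b < a → x < y) := by
  rw [Prod.Lex.toLex_lt_toLex]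
  constructor
  · rintro (h | ⟨rfl, h⟩)
    · exact ⟨h.le, fun _ => h⟩
    · exact ⟨le_rfl, fun h' => absurd h h'.asymm⟩
  · rintro ⟨hle, hlt⟩
    rcases hle.lt_or_eq with h | rfl
    · exact Or.inl h
    · exact Or.inr ⟨rfl, hab.lt_or_gt.resolve_right fun h => (hlt h).false⟩

lemma Fin.strictMono_iff_forall_lt_add_one {n : ℕ} {α : Type*} [Preorder α] {g : Fin n → α} :
    StrictMono g ↔ ∀ (s : ℕ) (hs : s + 1 < n), g ⟨s, Nat.lt_of_succ_lt hs⟩ < g ⟨s + 1, hs⟩ := by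
  cases n with
  | zero => exact ⟨fun _ _ hs => by omega, fun _ a => a.elim0⟩
  | succ m =>
    rw [Fin.strictMono_iff_lt_succ]
    exact ⟨fun h s hs => h ⟨s, by omega⟩, fun h i => h i (by omega)⟩

namespace Tuple

variable {n : ℕ} {X : Type*} [LinearOrder X]

lemma eq_sort_iff_strictMono_toLex {f : Fin n → X} {σ : Equiv.Perm (Fin n)} :
    σ = sort f ↔ StrictMono fun s => toLex (f (σ s), σ s) :=
  eq_sort_iff'

lemma toLex_lt_toLex_iff_sort_symm_lt (f : Fin n → X) (i j : Fin n) :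
    toLex (f i, i) < toLex (f j, j) ↔ (sort f)⁻¹ i < (sort f)⁻¹ j := by
  have hsort := (eq_sort_iff_strictMono_toLex (f := f)).1 rfl
  simpa using hsort.lt_iff_lt (a := (sort f)⁻¹ i) (b := (sort f)⁻¹ j)

lemma eq_sort_iff_forall_le_succ {f : Fin n → X} {σ : Equiv.Perm (Fin n)} :
    σ = sort f ↔ ∀ (s : ℕ) (hs : s + 1 < n),
      f (σ ⟨s, Nat.lt_of_succ_lt hs⟩) ≤ f (σ ⟨s + 1, hs⟩) ∧
        (σ ⟨s + 1, hs⟩ < σ ⟨s, Nat.lt_of_succ_lt hs⟩ →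
          f (σ ⟨s, Nat.lt_of_succ_lt hs⟩) < f (σ ⟨s + 1, hs⟩)) := by
  rw [eq_sort_iff_strictMono_toLex, Fin.strictMono_iff_forall_lt_add_one]
  refine forall₂_congr fun s hs => toLex_lt_toLex_iff_of_ne ?_
  simp [σ.injective.ne_iff, Fin.ext_iff]

end Tuple

theorem stmt16_general (n : ℕ) (X : Type*) [LinearOrder X]
    (r : Fin n → Fin n → Prop) :
    let lin : Set (Equiv.Perm (Fin n)) :=
      {σ | ∀ i j, r i j → i ≠ j → σ⁻¹ i < σ⁻¹ j}
    let A : Equiv.Perm (Fin n) → Set (Fin n → X) := fun σ =>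
      {f | ∀ (s : ℕ) (hs : s + 1 < n),
        f (σ ⟨s, Nat.lt_of_succ_lt hs⟩) ≤ f (σ ⟨s + 1, hs⟩) ∧
          (σ ⟨s + 1, hs⟩ < σ ⟨s, Nat.lt_of_succ_lt hs⟩ →
            f (σ ⟨s, Nat.lt_of_succ_lt hs⟩) < f (σ ⟨s + 1, hs⟩))}
    ({f : Fin n → X | ∀ i j, r i j → i ≠ j →
        f i ≤ f j ∧ ((j : Fin n) < i → f i < f j)} = ⋃ σ ∈ lin, A σ) ∧
      lin.PairwiseDisjoint A := by
  intro lin A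
  have mem_A : ∀ f σ, f ∈ A σ ↔ σ = Tuple.sort f := fun _ _ =>
    Tuple.eq_sort_iff_forall_le_succ.symm
  refine ⟨?_, fun σ _ τ _ hστ => ?_⟩
  · ext f
    simp only [Set.mem_iUnion, exists_prop, mem_A, exists_eq_right]
    refine forall₄_congr fun i j _ hij => ?_
    rw [← toLex_lt_toLex_iff_of_ne hij, Tuple.toLex_lt_toLex_iff_sort_symm_lt]
  · exact Set.disjoint_left.2 fun f hσ hτ =>
      hστ (((mem_A f σ).1 hσ).trans ((mem_A f τ).1 hτ).symm)

theorem stmt16 (n : ℕ) (X : Type*) [LinearOrder X]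
    (r : Fin n → Fin n → Prop) (hr : IsPartialOrder (Fin n) r) :
    let lin : Set (Equiv.Perm (Fin n)) :=
      {σ | ∀ i j, r i j → i ≠ j → σ⁻¹ i < σ⁻¹ j}
    let A : Equiv.Perm (Fin n) → Set (Fin n → X) := fun σ =>
      {f | ∀ (s : ℕ) (hs : s + 1 < n),
        f (σ ⟨s, Nat.lt_of_succ_lt hs⟩) ≤ f (σ ⟨s + 1, hs⟩) ∧
          (σ ⟨s + 1, hs⟩ < σ ⟨s, Nat.lt_of_succ_lt hs⟩ →
            f (σ ⟨s, Nat.lt_of_succ_lt hs⟩) < f (σ ⟨s + 1, hs⟩))}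
    ({f : Fin n → X | ∀ i j, r i j → i ≠ j →
        f i ≤ f j ∧ ((j : Fin n) < i → f i < f j)} = ⋃ σ ∈ lin, A σ) ∧
      lin.PairwiseDisjoint A :=
  stmt16_general n X r
end

section
/- For any signed permutation π ∈ B_n, the generating function for the type B enriched order polynomial satisfies Σ_{k ≥ 0} Ω'_B(π; k) t^k = ((1+t)^n/(1-t)^{n+1})·(2t/(1+t))^{ς(π)}·(4t/(1+t)^2)^{pe_B(π)}, where ς(π) = 0 if π(1) > 0 and ς(π) = 1 if π(1) < 0. In particular Ω'_B(π; k) depends only on the number of type B peaks and the sign of π(1). -/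
open scoped Classical

noncomputable section

/-- A signed permutation of `{±1, …, ±n}`: a bijection `π : ℤ → ℤ` with
`π(-i) = -π(i)` that fixes every integer of absolute value greater than `n`. -/
def IsSignedPerm (n : ℕ) (π : Equiv.Perm ℤ) : Prop :=
  (∀ i : ℤ, π (-i) = -π i) ∧ ∀ i : ℤ, (n : ℤ) < |i| → π i = i

/-- The hyperoctahedral group `B_n`, realized as a subgroup of `Equiv.Perm ℤ`. -/
def Bgroup (n : ℕ) : Subgroup (Equiv.Perm ℤ) where
  carrier := {π | IsSignedPerm n π}
  one_mem' := ⟨fun i => by simp, fun i _ => rfl⟩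
  mul_mem' := fun {a b} ha hb =>
    ⟨fun i => by simp only [Equiv.Perm.mul_apply, hb.1 i, ha.1 (b i)],
     fun i hi => by simp only [Equiv.Perm.mul_apply, hb.2 i hi, ha.2 i hi]⟩
  inv_mem' := fun {a} ha =>
    ⟨fun i => by rw [Equiv.Perm.inv_eq_iff_eq, ha.1]; simp,
     fun i hi => by rw [Equiv.Perm.inv_eq_iff_eq]; exact (ha.2 i hi).symm⟩

/-- The type B descent set of `π`: positions `0 ≤ s ≤ n-1` with `π(s) > π(s+1)`. -/
def desSetB (n : ℕ) (π : Equiv.Perm ℤ) : Finset ℕ :=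
  (Finset.range n).filter fun s => π ((s : ℤ) + 1) < π (s : ℤ)

/-- The type B descent number. -/
def desB (n : ℕ) (π : Equiv.Perm ℤ) : ℕ := (desSetB n π).card

/-- Type B peak set: positions `1 ≤ i ≤ n-1` with `π(i-1) < π(i) > π(i+1)`. -/
def peakSetB (n : ℕ) (π : Equiv.Perm ℤ) : Finset ℕ :=
  (Finset.Ico 1 n).filter fun i =>
    π ((i : ℤ) - 1) < π (i : ℤ) ∧ π ((i : ℤ) + 1) < π (i : ℤ)

/-- `ς(π)`: `0` if `π(1) > 0` and `1` if `π(1) < 0`. -/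
def sgnB (π : Equiv.Perm ℤ) : ℕ := if π 1 < 0 then 1 else 0

/-- `Ω'_B(π; k)`: the number of type B enriched `π`-partitions with parts in the
chain `0 < 1⁻¹ < 1 < 2⁻¹ < 2 < ⋯ < k⁻¹ < k`, encoded as `0, 1, 2, …, 2k` (the
code `2m-1` stands for `m⁻¹`, with exponent `-1`; even codes have exponent `+1`).
The value at position `0` is `0`. -/
def enrichedCountB (n k : ℕ) (π : Equiv.Perm ℤ) : ℕ :=
  Nat.card {a : Fin (n + 1) → ℕ //
    a 0 = 0 ∧ (∀ s, a s ≤ 2 * k) ∧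
    ∀ (s : ℕ) (hs : s < n),
      if π ((s : ℤ) + 1) < π (s : ℤ) then
        a ⟨s, by omega⟩ < a ⟨s + 1, by omega⟩ ∨
          (a ⟨s, by omega⟩ = a ⟨s + 1, by omega⟩ ∧ a ⟨s + 1, by omega⟩ % 2 = 1)
      else
        a ⟨s, by omega⟩ < a ⟨s + 1, by omega⟩ ∨
          (a ⟨s, by omega⟩ = a ⟨s + 1, by omega⟩ ∧ a ⟨s + 1, by omega⟩ % 2 = 0)}

/-!
Let `w` be the descent word of `π`, and let `c_s(j)` count the enriched chains
`0 = a_0 ≤ ⋯ ≤ a_s = j` in the coding `0, 1, 2, …` of `0 < 1⁻¹ < 1 < ⋯`, so that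
`Ω'_B(π; k) = ∑_{j ≤ 2k} c_n(j)`. Split `c_s` by parity into `E_s = ∑ c_s(2k) tᵏ` and
`O_s = ∑ c_s(2k+1) tᵏ⁺¹`. Then `(1 - t)ˢ (E_s, O_s)` follows a two-state transfer recursion:
with `S = E + O`, an ascent sends `(E, O)` to `(S, tS)` and a descent to `(tE + O, tE + O)`.
So `O = tE` after an ascent and `O = E` after a descent, and the total `S` is multiplied by
`1 + t` at each step except at a peak, where the factor is `4t/(1 + t)`; the first step
contributes `2t` instead of `1 + t` when `π(1) < 0`.
-/

open Finset PowerSeries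

def EnrichedStep (b : Bool) (x y : ℕ) : Prop :=
  x < y ∨ (x = y ∧ y % 2 = b.toNat)

theorem EnrichedStep.le {b : Bool} {x y : ℕ} (h : EnrichedStep b x y) : x ≤ y := by
  rcases h with h | ⟨rfl, -⟩
  exacts [h.le, le_rfl]

abbrev EnrichedChain (w : ℕ → Bool) (s j : ℕ) : Type :=
  {a : Fin (s + 1) → ℕ // a 0 = 0 ∧ a (Fin.last s) = j ∧
    ∀ i : Fin s, EnrichedStep (w i) (a i.castSucc) (a i.succ)}

namespace EnrichedChain

variable {w : ℕ → Bool} {s j : ℕ}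

theorem le (a : EnrichedChain w s j) (i : Fin (s + 1)) : a.1 i ≤ j := by
  have hmono : Monotone a.1 := Fin.monotone_iff_le_succ.2 fun i => (a.2.2.2 i).le
  exact (hmono (Fin.le_last i)).trans_eq a.2.2.1

instance : Finite (EnrichedChain w s j) :=
  Finite.of_injective (fun a i => (⟨a.1 i, Nat.lt_succ_of_le (a.le i)⟩ : Fin (j + 1)))
    fun _ _ h => Subtype.ext <| funext fun i => congrArg Fin.val (congrFun h i)

variable (w s j) in
def snocEquiv : EnrichedChain w (s + 1) j ≃
    Σ x : ((range (j + 1)).filter (EnrichedStep (w s) · j)), EnrichedChain w s x where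
  toFun a := ⟨⟨a.1 (Fin.last s).castSucc, mem_filter.2
      ⟨mem_range.2 (Nat.lt_succ_of_le (a.le _)), by simpa [a.2.2.1] using a.2.2.2 (Fin.last s)⟩⟩,
    ⟨Fin.init a.1, a.2.1, rfl, fun i => a.2.2.2 i.castSucc⟩⟩
  invFun p := by
    refine ⟨Fin.snoc p.2.1 j, ?_, Fin.snoc_last _ _, Fin.lastCases ?_ fun i => ?_⟩
    · exact (Fin.snoc_castSucc (α := fun _ => ℕ) _ _ 0).trans p.2.2.1
    · rw [Fin.succ_last, Fin.snoc_last, Fin.snoc_castSucc, p.2.2.2.1]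
      exact (mem_filter.1 p.1.2).2
    · rw [Fin.succ_castSucc, Fin.snoc_castSucc, Fin.snoc_castSucc, Fin.val_castSucc]
      exact p.2.2.2.2 i
  left_inv a := Subtype.ext <| by
    conv_rhs => rw [← Fin.snoc_init_self a.1, a.2.2.1]
  right_inv := by
    rintro ⟨⟨x, hx⟩, b, hb⟩
    obtain rfl : (Fin.snoc b j : Fin (s + 2) → ℕ) (Fin.last s).castSucc = x :=
      (Fin.snoc_castSucc ..).trans hb.2.1
    exact Sigma.ext rfl (heq_of_eq (Subtype.ext (Fin.init_snoc (α := fun _ => ℕ) j b)))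

end EnrichedChain

def chainCount (w : ℕ → Bool) (s j : ℕ) : ℕ := Nat.card (EnrichedChain w s j)

theorem chainCount_zero (w : ℕ → Bool) (j : ℕ) : chainCount w 0 j = if j = 0 then 1 else 0 := by
  split_ifs with hj
  · subst hj
    refine Nat.card_eq_one_iff_exists.2 ⟨⟨fun _ => 0, rfl, rfl, fun i => i.elim0⟩, fun a => ?_⟩
    exact Subtype.ext <| funext fun i => by rw [Subsingleton.elim (α := Fin 1) i 0]; exact a.2.1
  · exact @Nat.card_of_isEmpty _ ⟨fun a => hj (a.2.2.1.symm.trans a.2.1)⟩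

theorem chainCount_succ (w : ℕ → Bool) (s j : ℕ) :
    chainCount w (s + 1) j =
      ∑ x ∈ range j, chainCount w s x + if j % 2 = (w s).toNat then chainCount w s j else 0 := by
  rw [chainCount, Nat.card_congr (EnrichedChain.snocEquiv w s j), Nat.card_sigma]
  refine (sum_coe_sort _ (chainCount w s)).trans ?_
  rw [sum_filter, sum_range_succ]
  congr 1
  · exact sum_congr rfl fun x hx => if_pos (Or.inl (mem_range.1 hx))
  · simp [EnrichedStep]

def descentWord (π : Equiv.Perm ℤ) (s : ℕ) : Bool := decide (π (s + 1) < π s)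

theorem enrichedCountB_eq_sum_chainCount (n k : ℕ) (π : Equiv.Perm ℤ) :
    enrichedCountB n k π = ∑ j ∈ range (2 * k + 1), chainCount (descentWord π) n j := by
  have hstep (s x y : ℕ) :
      (if π (s + 1) < π s then x < y ∨ (x = y ∧ y % 2 = 1) else x < y ∨ (x = y ∧ y % 2 = 0)) ↔
        EnrichedStep (descentWord π s) x y := by
    by_cases h : π (s + 1) < π s <;> simp [EnrichedStep, descentWord, h]
  rw [enrichedCountB]
  refine (Nat.card_congr (β := Σ j : range (2 * k + 1), EnrichedChain (descentWord π) n j)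
    ⟨fun a => ⟨⟨a.1 (Fin.last n), mem_range_succ_iff.2 (a.2.2.1 _)⟩,
        ⟨a.1, a.2.1, rfl, fun i => (hstep _ _ _).1 (a.2.2.2 i i.2)⟩⟩,
      fun p => ⟨p.2.1, p.2.2.1, fun i => (p.2.le i).trans (mem_range_succ_iff.1 p.1.2),
        fun s hs => (hstep _ _ _).2 (p.2.2.2.2 ⟨s, hs⟩)⟩,
      fun _ => rfl, ?_⟩).trans ?_
  · rintro ⟨⟨j, hj⟩, b, hb⟩
    obtain rfl : b (Fin.last n) = j := hb.2.1
    rfl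
  · rw [Nat.card_sigma]
    exact sum_coe_sort _ (chainCount (descentWord π) n)

section ParityParts

variable {R : Type*} [CommRing R] (f : ℕ → R)

def evenPart : R⟦X⟧ := PowerSeries.mk fun k => f (2 * k)

def oddPart : R⟦X⟧ := X * PowerSeries.mk fun k => f (2 * k + 1)

def partialSumSeries : R⟦X⟧ := PowerSeries.mk fun k => ∑ j ∈ range (2 * k + 1), f j

theorem one_sub_X_mul_partialSumSeries :
    (1 - X) * partialSumSeries f = evenPart f + oddPart f := by
  ext (_ | k)
  · simp [partialSumSeries, evenPart, oddPart, sub_mul]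
  · simp only [partialSumSeries, evenPart, oddPart, sub_mul, one_mul, map_sub, map_add,
      coeff_succ_X_mul, coeff_mk]
    rw [show 2 * (k + 1) + 1 = 2 * k + 1 + 1 + 1 by ring, sum_range_succ, sum_range_succ]
    ring_nf

variable {f} {g : ℕ → R} {b : Bool}

theorem evenPart_of_step
    (h : ∀ j, g j = ∑ x ∈ range j, f x + if j % 2 = b.toNat then f j else 0) :
    evenPart g = partialSumSeries f - if b then evenPart f else 0 := by
  ext k
  cases b <;> simp [evenPart, partialSumSeries, h, sum_range_succ]

theorem oddPart_of_step
    (h : ∀ j, g j = ∑ x ∈ range j, f x + if j % 2 = b.toNat then f j else 0) :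
    oddPart g = X * partialSumSeries f + if b then oddPart f else 0 := by
  ext (_ | k)
  · cases b <;> simp [oddPart]
  · cases b <;> simp [oddPart, partialSumSeries, h, coeff_succ_X_mul, sum_range_succ, Nat.add_mod]

end ParityParts

def peakCount (w : ℕ → Bool) (s : ℕ) : ℕ :=
  ((Ico 1 s).filter fun i => w (i - 1) = false ∧ w i = true).card

theorem peakCount_succ_succ (w : ℕ → Bool) (s : ℕ) :
    peakCount w (s + 1 + 1) =
      peakCount w (s + 1) + if w s = false ∧ w (s + 1) = true then 1 else 0 := by
  rw [peakCount, peakCount, Nat.Ico_succ_right_eq_insert_Ico (Nat.le_add_left 1 s), filter_insert,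
    Nat.add_sub_cancel]
  split_ifs <;> simp

section Transfer

variable {R : Type*} [CommRing R] (w : ℕ → Bool)

def transfer : ℕ → R⟦X⟧ × R⟦X⟧
  | 0 => (1, 0)
  | s + 1 =>
    let p := transfer s
    if w s then (X * p.1 + p.2, X * p.1 + p.2) else (p.1 + p.2, X * (p.1 + p.2))

def transferTotal (s : ℕ) : R⟦X⟧ := (transfer w s).1 + (transfer w s).2

theorem transfer_eq_parts (s : ℕ) :
    transfer w s = ((1 - X) ^ s * evenPart (fun j => (chainCount w s j : R)),
      (1 - X) ^ s * oddPart (fun j => (chainCount w s j : R))) := by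
  induction s with
  | zero =>
    ext (_ | k) <;> simp [transfer, evenPart, oddPart, chainCount_zero, coeff_one, coeff_succ_X_mul]
  | succ s ih =>
    have hstep (j : ℕ) : (chainCount w (s + 1) j : R) = ∑ x ∈ range j, (chainCount w s x : R) +
        if j % 2 = (w s).toNat then (chainCount w s j : R) else 0 := by
      rw [chainCount_succ]; push_cast; rfl
    have hsum := one_sub_X_mul_partialSumSeries (fun j => (chainCount w s j : R))
    rw [transfer, ih, evenPart_of_step hstep, oddPart_of_step hstep]
    cases w s <;>
      simp only [Bool.false_eq_true, if_false, if_true, sub_zero, add_zero, Prod.mk.injEq] <;>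
      exact ⟨by linear_combination -(1 - X) ^ s * hsum,
        by linear_combination -X * (1 - X) ^ s * hsum⟩

theorem transfer_succ (s : ℕ) : transfer (R := R) w (s + 1) =
    if w s then (X * (transfer w s).1 + (transfer w s).2, X * (transfer w s).1 + (transfer w s).2)
    else ((transfer w s).1 + (transfer w s).2, X * ((transfer w s).1 + (transfer w s).2)) :=
  rfl

theorem transfer_succ_snd (s : ℕ) :
    (transfer (R := R) w (s + 1)).2 = (if w s then 1 else X) * (transfer w (s + 1)).1 := by
  rw [transfer_succ]
  split_ifs <;> simp

variable {s : ℕ}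

theorem transferTotal_succ_succ_of_peak (h₀ : w s = false) (h₁ : w (s + 1) = true) :
    (1 + X) * transferTotal (R := R) w (s + 1 + 1) = 4 * X * transferTotal w (s + 1) := by
  have hsnd := transfer_succ_snd (R := R) w s
  rw [h₀, if_neg Bool.false_ne_true] at hsnd
  rw [transferTotal, transferTotal, transfer_succ w (s + 1), if_pos h₁, hsnd]
  ring

theorem transferTotal_succ_succ_of_not_peak (h : ¬(w s = false ∧ w (s + 1) = true)) :
    transferTotal (R := R) w (s + 1 + 1) = (1 + X) * transferTotal w (s + 1) := by
  have hsnd := transfer_succ_snd (R := R) w s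
  rw [transferTotal, transferTotal, transfer_succ w (s + 1), hsnd]
  cases h₁ : w (s + 1)
  · simp only [Bool.false_eq_true, if_false]
    ring
  · obtain h₀ : w s = true := by simpa [h₁] using h
    simp only [h₀, if_true]
    ring

theorem transferTotal_closed_form (s : ℕ) :
    (1 + X) ^ ((w 0).toNat + 2 * peakCount w (s + 1)) * transferTotal (R := R) w (s + 1) =
      (1 + X) ^ (s + 1) * (2 * X) ^ (w 0).toNat * (4 * X) ^ peakCount w (s + 1) := by
  induction s with
  | zero =>
    cases h : w 0 <;> simp [transferTotal, transfer, peakCount, h]; ring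
  | succ s ih =>
    rw [peakCount_succ_succ]
    by_cases hpeak : w s = false ∧ w (s + 1) = true
    · rw [if_pos hpeak]
      linear_combination (1 + X) ^ ((w 0).toNat + 2 * peakCount w (s + 1) + 1) *
        transferTotal_succ_succ_of_peak (R := R) w hpeak.1 hpeak.2 + 4 * X * (1 + X) * ih
    · rw [if_neg hpeak, add_zero, transferTotal_succ_succ_of_not_peak w hpeak]
      linear_combination (1 + X) * ih

end Transfer

theorem PowerSeries.eq_of_one_add_X_pow_mul_eq {K : Type*} [Field K] {F : K⟦X⟧} {n a b : ℕ}
    (h : (1 + X) ^ (a + 2 * b) * ((1 - X) ^ (n + 1) * F) =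
      (1 + X) ^ n * (2 * X) ^ a * (4 * X) ^ b) :
    F = (1 + X) ^ n * ((1 - X) ^ (n + 1))⁻¹ * (2 * X * (1 + X)⁻¹) ^ a *
      (4 * X * ((1 + X) ^ 2)⁻¹) ^ b := by
  have hunit (φ : K⟦X⟧) (hφ : constantCoeff φ = 1) : φ * φ⁻¹ = 1 :=
    PowerSeries.mul_inv_cancel _ (by simp [hφ])
  set c := ((1 - X : K⟦X⟧) ^ (n + 1))⁻¹
  set u := (1 + X : K⟦X⟧)⁻¹
  set v := ((1 + X : K⟦X⟧) ^ 2)⁻¹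
  have hc : (1 - X) ^ (n + 1) * c = 1 := hunit _ (by simp)
  have hu : (1 + X) ^ a * u ^ a = 1 := by rw [← mul_pow, hunit _ (by simp), one_pow]
  have hv : (1 + X) ^ (2 * b) * v ^ b = 1 := by
    rw [pow_mul, ← mul_pow, hunit _ (by simp), one_pow]
  calc F = F * ((1 - X) ^ (n + 1) * c) * ((1 + X) ^ a * u ^ a) * ((1 + X) ^ (2 * b) * v ^ b) := by
        rw [hc, hu, hv, mul_one, mul_one, mul_one]
    _ = (1 + X) ^ (a + 2 * b) * ((1 - X) ^ (n + 1) * F) * c * u ^ a * v ^ b := by ring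
    _ = _ := by rw [h]; ring

theorem IsSignedPerm.apply_zero {n : ℕ} {π : Equiv.Perm ℤ} (hπ : IsSignedPerm n π) : π 0 = 0 := by
  have h := hπ.1 0
  rw [neg_zero] at h
  omega

theorem sgnB_eq_toNat_descentWord_zero {n : ℕ} {π : Equiv.Perm ℤ} (hπ : IsSignedPerm n π) :
    sgnB π = (descentWord π 0).toNat := by
  by_cases h : π 1 < 0 <;> simp [sgnB, descentWord, hπ.apply_zero, h]

theorem card_peakSetB_eq_peakCount (n : ℕ) (π : Equiv.Perm ℤ) :
    (peakSetB n π).card = peakCount (descentWord π) n := by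
  rw [peakSetB, peakCount]
  congr 1
  refine filter_congr fun i hi => ?_
  have hcast : ((i - 1 : ℕ) : ℤ) = i - 1 := by have := (mem_Ico.1 hi).1; omega
  have hne : π (i - 1) ≠ π i := π.injective.ne (by omega)
  simp only [descentWord, hcast, sub_add_cancel, decide_eq_false_iff_not, decide_eq_true_eq, not_lt]
  exact and_congr_left' ⟨fun h => h.le, fun h => lt_of_le_of_ne h hne⟩

theorem mk_enrichedCountB {n : ℕ} {π : Equiv.Perm ℤ} (hπ : IsSignedPerm n π) :
    PowerSeries.mk (fun k => (enrichedCountB n k π : ℚ)) =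
      (1 + X) ^ n * ((1 - X) ^ (n + 1))⁻¹ * (2 * X * ((1 + X)⁻¹)) ^ sgnB π *
        (4 * X * (((1 + X) ^ 2)⁻¹)) ^ (peakSetB n π).card := by
  have htotal : (1 - X) ^ (n + 1) * PowerSeries.mk (fun k => (enrichedCountB n k π : ℚ)) =
      transferTotal (descentWord π) n := by
    have hmk : PowerSeries.mk (fun k => (enrichedCountB n k π : ℚ)) =
        partialSumSeries (fun j => (chainCount (descentWord π) n j : ℚ)) := by
      ext k
      simp [partialSumSeries, enrichedCountB_eq_sum_chainCount]
    rw [hmk, pow_succ, mul_assoc, one_sub_X_mul_partialSumSeries, transferTotal,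
      transfer_eq_parts]
    ring
  rw [sgnB_eq_toNat_descentWord_zero hπ, card_peakSetB_eq_peakCount]
  refine PowerSeries.eq_of_one_add_X_pow_mul_eq ?_
  rw [htotal]
  rcases n with _ | m
  · have hw : descentWord π 0 = false := by simp [descentWord, hπ.apply_zero, hπ.2 1 (by norm_num)]
    simp [hw, transferTotal, transfer, peakCount]
  · exact transferTotal_closed_form (descentWord π) m

open PowerSeries in
theorem stmt17 (n : ℕ) (π : Equiv.Perm ℤ) (hπ : IsSignedPerm n π) :
    (PowerSeries.mk (fun k => (enrichedCountB n k π : ℚ)) =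
      (1 + X) ^ n * ((1 - X) ^ (n + 1))⁻¹ *
        (2 * X * ((1 + X)⁻¹)) ^ sgnB π *
        (4 * X * (((1 + X) ^ 2)⁻¹)) ^ (peakSetB n π).card) ∧
    ∀ π' : Equiv.Perm ℤ, IsSignedPerm n π' →
      (peakSetB n π').card = (peakSetB n π).card → sgnB π' = sgnB π →
        ∀ k, enrichedCountB n k π' = enrichedCountB n k π := by
  refine ⟨mk_enrichedCountB hπ, fun π' hπ' hpeak hsgn k => ?_⟩
  have h := mk_enrichedCountB hπ'
  rw [hpeak, hsgn, ← mk_enrichedCountB hπ] at h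
  simpa using congrArg (coeff k) h
end
end

section
/- For any permutation π of [n] and positive integers k, l, the enriched order polynomials satisfy Ω'(π; 2kl) = Σ_{στ = π} Ω'(σ; k)·Ω'(τ; l). -/
open scoped Classical

noncomputable section

/-- The value of `π` at the 1-based position `i`, with the convention
`π(0) = π(n+1) = 0` and values in `{1, …, n}`. -/
def pval {n : ℕ} (π : Equiv.Perm (Fin n)) (i : ℕ) : ℕ :=
  if h : 1 ≤ i ∧ i ≤ n then ((π ⟨i - 1, by omega⟩ : Fin n) : ℕ) + 1 else 0

/-- The descent set of `π`: positions `1 ≤ s ≤ n-1` with `π(s) > π(s+1)`. -/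
def desSet {n : ℕ} (π : Equiv.Perm (Fin n)) : Finset ℕ :=
  (Finset.Ico 1 n).filter fun s => pval π (s + 1) < pval π s

/-- The descent number of `π`. -/
def des {n : ℕ} (π : Equiv.Perm (Fin n)) : ℕ := (desSet π).card

/-- `i` is a peak of `π` (with the convention `π(0) = π(n+1) = 0`). -/
def isPk {n : ℕ} (π : Equiv.Perm (Fin n)) (i : ℕ) : Prop :=
  pval π (i - 1) < pval π i ∧ pval π (i + 1) < pval π i

/-- Interior peak set: peaks `i` with `1 < i < n`. -/
def intPk {n : ℕ} (π : Equiv.Perm (Fin n)) : Finset ℕ :=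
  (Finset.Ioo 1 n).filter (isPk π)

/-- Left peak set: peaks `i` with `1 ≤ i < n`. -/
def leftPk {n : ℕ} (π : Equiv.Perm (Fin n)) : Finset ℕ :=
  (Finset.Ico 1 n).filter (isPk π)

/-- Right peak set: peaks `i` with `1 < i ≤ n`. -/
def rightPk {n : ℕ} (π : Equiv.Perm (Fin n)) : Finset ℕ :=
  (Finset.Ioc 1 n).filter (isPk π)

/-- Exterior peak set: peaks `i` with `1 ≤ i ≤ n`. -/
def extPk {n : ℕ} (π : Equiv.Perm (Fin n)) : Finset ℕ :=
  (Finset.Icc 1 n).filter (isPk π)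

/-- Position of a nonzero integer `a` in the total order `-1 < 1 < -2 < 2 < ⋯`. -/
def ek (a : ℤ) : ℤ := if 0 < a then 2 * a - 1 else -2 * a - 2

/-- `Ω'(π; k)`: the number of enriched `π`-partitions with parts in
`[k]' = {-1 < 1 < -2 < 2 < ⋯ < -k < k}`. -/
def enrichedCount {n : ℕ} (π : Equiv.Perm (Fin n)) (k : ℕ) : ℕ :=
  Nat.card {a : Fin n → ℤ //
    (∀ s, a s ≠ 0 ∧ |a s| ≤ (k : ℤ)) ∧
    ∀ (s : ℕ) (hs : s + 1 < n),
      if π ⟨s + 1, hs⟩ < π ⟨s, Nat.lt_of_succ_lt hs⟩ then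
        ek (a ⟨s, Nat.lt_of_succ_lt hs⟩) < ek (a ⟨s + 1, hs⟩) ∨
          (a ⟨s, Nat.lt_of_succ_lt hs⟩ = a ⟨s + 1, hs⟩ ∧ a ⟨s + 1, hs⟩ < 0)
      else
        ek (a ⟨s, Nat.lt_of_succ_lt hs⟩) < ek (a ⟨s + 1, hs⟩) ∨
          (a ⟨s, Nat.lt_of_succ_lt hs⟩ = a ⟨s + 1, hs⟩ ∧ 0 < a ⟨s + 1, hs⟩)}

/-- Position of an integer `a` in the total order `0 < -1 < 1 < -2 < 2 < ⋯`. -/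
def el (a : ℤ) : ℤ := if 0 < a then 2 * a else if a = 0 then 0 else -2 * a - 1

/-- `Ω^{(ℓ)}(π; k)`: the number of left enriched `π`-partitions with parts in
`[k]^{(ℓ)} = {0 < -1 < 1 < ⋯ < -k < k}`. -/
def leftEnrichedCount {n : ℕ} (π : Equiv.Perm (Fin n)) (k : ℕ) : ℕ :=
  Nat.card {a : Fin n → ℤ //
    (∀ s, |a s| ≤ (k : ℤ)) ∧
    ∀ (s : ℕ) (hs : s + 1 < n),
      if π ⟨s + 1, hs⟩ < π ⟨s, Nat.lt_of_succ_lt hs⟩ then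
        el (a ⟨s, Nat.lt_of_succ_lt hs⟩) < el (a ⟨s + 1, hs⟩) ∨
          (a ⟨s, Nat.lt_of_succ_lt hs⟩ = a ⟨s + 1, hs⟩ ∧ a ⟨s + 1, hs⟩ < 0)
      else
        el (a ⟨s, Nat.lt_of_succ_lt hs⟩) < el (a ⟨s + 1, hs⟩) ∨
          (a ⟨s, Nat.lt_of_succ_lt hs⟩ = a ⟨s + 1, hs⟩ ∧ 0 ≤ a ⟨s + 1, hs⟩)}

/-!
List `[2kl]'` as `l` consecutive blocks of `2k` letters, the block of `a ∈ [l]'` being a copy of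
`[k]'` read forwards if `a > 0` and backwards if `a < 0` (`pairEnc k a u`). This identifies
`[2kl]'` with `[l]' × [k]'`, and the sign of a letter is the product of the signs of its
coordinates.

A word `a` is an enriched `ρ`-partition exactly when the keys `(ek (a i), ± ρ i)`, with sign `+` for
positive letters, increase strictly in `i`. Given an enriched `π`-partition `c = pairEnc (A, U)`,
let `τ` be the permutation sorting the keys of `U`, so that `U ∘ τ⁻¹` is an enriched
`πτ⁻¹`-partition into `[k]'`. Two letters of `c` in the same block `A` compare like their
`U`-keys, reversed when `A < 0`; this is exactly how the labels `τ` break ties between equal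
letters of `A`, so `A` is an enriched `τ`-partition into `[l]'`. Conversely `τ` and the two
partitions determine `c`.
-/

open Equiv Function

def ekInv (m : ℤ) : ℤ := if m % 2 = 1 then (m + 1) / 2 else -(m / 2) - 1

lemma ek_nonneg {z : ℤ} (hz : z ≠ 0) : 0 ≤ ek z := by
  have := hz.lt_or_gt
  unfold ek; split_ifs <;> omega

lemma ek_ekInv {m : ℤ} (hm : 0 ≤ m) : ek (ekInv m) = m := by
  unfold ek ekInv; split_ifs <;> omega

lemma ekInv_ek (z : ℤ) : ekInv (ek z) = z := by
  unfold ek ekInv; split_ifs <;> omega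

lemma ekInv_ne_zero {m : ℤ} (hm : 0 ≤ m) : ekInv m ≠ 0 := by
  unfold ekInv; split_ifs <;> omega

lemma ek_lt_iff_abs_le (z L : ℤ) : ek z < 2 * L ↔ |z| ≤ L := by
  rw [abs_le]; unfold ek; split_ifs <;> omega

lemma ek_emod_two (z : ℤ) : ek z % 2 = 1 ↔ 0 < z := by
  unfold ek; split_ifs <;> omega

lemma ek_injective : Injective ek := LeftInverse.injective ekInv_ek

def ekKey (z p : ℤ) : ℤ ×ₗ ℤ := toLex (ek z, if 0 < z then p else -p)

lemma ekKey_lt_ekKey_iff {z z' p p' : ℤ} (hz : z ≠ 0) :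
    ekKey z p < ekKey z' p' ↔
      ek z < ek z' ∨ z = z' ∧ (0 < z ∧ p < p' ∨ z < 0 ∧ p' < p) := by
  rw [ekKey, ekKey, Prod.Lex.toLex_lt_toLex, ek_injective.eq_iff]
  constructor
  · rintro (h | ⟨rfl, h⟩)
    · exact Or.inl h
    · exact Or.inr ⟨rfl, by split_ifs at h <;> omega⟩
  · rintro (h | ⟨rfl, h⟩)
    · exact Or.inl h
    · exact Or.inr ⟨rfl, by split_ifs <;> omega⟩

lemma ekKey_inj {z z' p p' : ℤ} : ekKey z p = ekKey z' p' ↔ z = z' ∧ p = p' := by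
  simp only [ekKey, toLex_inj, Prod.mk.injEq, ek_injective.eq_iff]
  constructor
  · rintro ⟨rfl, h⟩
    exact ⟨rfl, by split_ifs at h <;> omega⟩
  · rintro ⟨rfl, rfl⟩
    exact ⟨rfl, rfl⟩

lemma Int.mul_add_lt_mul_add_iff {K q q' r r' : ℤ} (hr : 0 ≤ r) (hrK : r < K) (hr' : 0 ≤ r')
    (hr'K : r' < K) : K * q + r < K * q' + r' ↔ q < q' ∨ q = q' ∧ r < r' := by
  rcases lt_trichotomy q q' with h | rfl | h
  · have : K * q + K ≤ K * q' := by nlinarith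
    omega
  · omega
  · have : K * q' + K ≤ K * q := by nlinarith
    omega

section Pair

def pairIndex (k : ℕ) (a u : ℤ) : ℤ := 2 * k * ek a + if 0 < a then ek u else 2 * k - 1 - ek u

def pairEnc (k : ℕ) (a u : ℤ) : ℤ := ekInv (pairIndex k a u)

def pairFst (k : ℕ) (c : ℤ) : ℤ := ekInv (ek c / (2 * k))

def pairSnd (k : ℕ) (c : ℤ) : ℤ :=
  ekInv (if 0 < pairFst k c then ek c % (2 * k) else 2 * k - 1 - ek c % (2 * k))

variable {k : ℕ}

lemma pairIndex_nonneg {a u : ℤ} (ha : a ≠ 0) (hu : u ≠ 0) (huk : |u| ≤ k) :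
    0 ≤ pairIndex k a u := by
  have := ek_nonneg ha
  have := ek_nonneg hu
  have := (ek_lt_iff_abs_le u k).2 huk
  have : 0 ≤ 2 * (k : ℤ) * ek a := by positivity
  unfold pairIndex; split_ifs <;> omega

lemma ek_pairEnc {a u : ℤ} (ha : a ≠ 0) (hu : u ≠ 0) (huk : |u| ≤ k) :
    ek (pairEnc k a u) = pairIndex k a u :=
  ek_ekInv (pairIndex_nonneg ha hu huk)

lemma pairEnc_ne_zero {a u : ℤ} (ha : a ≠ 0) (hu : u ≠ 0) (huk : |u| ≤ k) :
    pairEnc k a u ≠ 0 :=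
  ekInv_ne_zero (pairIndex_nonneg ha hu huk)

lemma abs_pairEnc_le {l : ℕ} {a u : ℤ} (ha : a ≠ 0) (hal : |a| ≤ l) (hu : u ≠ 0) (huk : |u| ≤ k) :
    |pairEnc k a u| ≤ (2 * k * l : ℕ) := by
  rw [← ek_lt_iff_abs_le, ek_pairEnc ha hu huk, pairIndex]
  have := ek_nonneg hu
  have := (ek_lt_iff_abs_le u k).2 huk
  have : 2 * (k : ℤ) * (ek a + 1) ≤ 2 * k * (2 * l) :=
    mul_le_mul_of_nonneg_left (by linarith [(ek_lt_iff_abs_le a l).2 hal]) (by positivity)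
  push_cast
  split_ifs <;> linarith

lemma pos_pairEnc_iff {a u : ℤ} (ha : a ≠ 0) (hu : u ≠ 0) (huk : |u| ≤ k) :
    0 < pairEnc k a u ↔ (0 < a ↔ 0 < u) := by
  rw [← ek_emod_two, ← ek_emod_two u, ek_pairEnc ha hu huk, pairIndex,
    show 2 * (k : ℤ) * ek a = 2 * (k * ek a) by ring]
  have := ha.lt_or_gt
  split_ifs <;> omega

lemma ek_pairEnc_ediv_emod (hk : 0 < k) {a u : ℤ} (ha : a ≠ 0) (hu : u ≠ 0) (huk : |u| ≤ k) :
    ek (pairEnc k a u) / (2 * k) = ek a ∧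
      ek (pairEnc k a u) % (2 * k) = if 0 < a then ek u else 2 * k - 1 - ek u := by
  have := ek_nonneg hu
  have := (ek_lt_iff_abs_le u k).2 huk
  rw [Int.ediv_emod_unique (by omega), ek_pairEnc ha hu huk, pairIndex]
  exact ⟨by ring, by split_ifs <;> omega, by split_ifs <;> omega⟩

lemma pairFst_pairEnc (hk : 0 < k) {a u : ℤ} (ha : a ≠ 0) (hu : u ≠ 0) (huk : |u| ≤ k) :
    pairFst k (pairEnc k a u) = a := by
  rw [pairFst, (ek_pairEnc_ediv_emod hk ha hu huk).1, ekInv_ek]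

lemma pairSnd_pairEnc (hk : 0 < k) {a u : ℤ} (ha : a ≠ 0) (hu : u ≠ 0) (huk : |u| ≤ k) :
    pairSnd k (pairEnc k a u) = u := by
  rw [pairSnd, pairFst_pairEnc hk ha hu huk, (ek_pairEnc_ediv_emod hk ha hu huk).2]
  split_ifs <;> simp [ekInv_ek]

lemma pairEnc_inj (hk : 0 < k) {a a' u u' : ℤ} (ha : a ≠ 0) (ha' : a' ≠ 0) (hu : u ≠ 0)
    (hu' : u' ≠ 0) (huk : |u| ≤ k) (hu'k : |u'| ≤ k) :
    pairEnc k a u = pairEnc k a' u' ↔ a = a' ∧ u = u' := by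
  refine ⟨fun h => ⟨?_, ?_⟩, fun h => by rw [h.1, h.2]⟩
  · rw [← pairFst_pairEnc hk ha hu huk, h, pairFst_pairEnc hk ha' hu' hu'k]
  · rw [← pairSnd_pairEnc hk ha hu huk, h, pairSnd_pairEnc hk ha' hu' hu'k]

lemma pairEnc_pairFst_pairSnd (hk : 0 < k) {c : ℤ} (hc : c ≠ 0) :
    pairEnc k (pairFst k c) (pairSnd k c) = c := by
  have hK : (0 : ℤ) < 2 * k := by omega
  have hq : 0 ≤ ek c / (2 * k) := Int.ediv_nonneg (ek_nonneg hc) hK.le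
  have hr := Int.emod_nonneg (ek c) hK.ne'
  have hr' := Int.emod_lt_of_pos (ek c) hK
  have hA : ek (pairFst k c) = ek c / (2 * k) := ek_ekInv hq
  have hU : ek (pairSnd k c) =
      if 0 < pairFst k c then ek c % (2 * k) else 2 * k - 1 - ek c % (2 * k) :=
    ek_ekInv (by split_ifs <;> omega)
  have hdiv := Int.mul_ediv_add_emod (ek c) (2 * k)
  have : pairIndex k (pairFst k c) (pairSnd k c) = ek c := by
    rw [pairIndex, hU, hA]; split_ifs <;> omega
  rw [pairEnc, this, ekInv_ek]

lemma pairFst_ne_zero (hk : 0 < k) {c : ℤ} (hc : c ≠ 0) : pairFst k c ≠ 0 :=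
  ekInv_ne_zero (Int.ediv_nonneg (ek_nonneg hc) (by omega))

lemma abs_pairFst_le (hk : 0 < k) {l : ℕ} {c : ℤ} (hc : c ≠ 0) (hcl : |c| ≤ (2 * k * l : ℕ)) :
    |pairFst k c| ≤ l := by
  have hq : 0 ≤ ek c / (2 * k) := Int.ediv_nonneg (ek_nonneg hc) (by omega)
  rw [← ek_lt_iff_abs_le, pairFst, ek_ekInv hq, Int.ediv_lt_iff_lt_mul (by omega)]
  have := (ek_lt_iff_abs_le c _).2 hcl
  push_cast at this
  linarith

lemma pairSnd_ne_zero (hk : 0 < k) (c : ℤ) : pairSnd k c ≠ 0 := by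
  have := Int.emod_nonneg (ek c) (by omega : (2 * k : ℤ) ≠ 0)
  have := Int.emod_lt_of_pos (ek c) (by omega : (0 : ℤ) < 2 * k)
  exact ekInv_ne_zero (by split_ifs <;> omega)

lemma abs_pairSnd_le (hk : 0 < k) (c : ℤ) : |pairSnd k c| ≤ k := by
  have := Int.emod_nonneg (ek c) (by omega : (2 * k : ℤ) ≠ 0)
  have := Int.emod_lt_of_pos (ek c) (by omega : (0 : ℤ) < 2 * k)
  rw [← ek_lt_iff_abs_le, pairSnd, ek_ekInv (by split_ifs <;> omega)]
  split_ifs <;> omega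


lemma ek_pairEnc_lt_iff {a a' u u' : ℤ} (ha : a ≠ 0) (ha' : a' ≠ 0) (hu : u ≠ 0)
    (hu' : u' ≠ 0) (huk : |u| ≤ k) (hu'k : |u'| ≤ k) :
    ek (pairEnc k a u) < ek (pairEnc k a' u') ↔
      ek a < ek a' ∨ a = a' ∧ (0 < a ∧ ek u < ek u' ∨ a < 0 ∧ ek u' < ek u) := by
  have := (ek_lt_iff_abs_le u k).2 huk
  have := (ek_lt_iff_abs_le u' k).2 hu'k
  have := ek_nonneg hu
  have := ek_nonneg hu'
  rw [ek_pairEnc ha hu huk, ek_pairEnc ha' hu' hu'k, pairIndex, pairIndex,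
    Int.mul_add_lt_mul_add_iff (by split_ifs <;> omega) (by split_ifs <;> omega)
      (by split_ifs <;> omega) (by split_ifs <;> omega), ek_injective.eq_iff]
  constructor
  · rintro (h | ⟨rfl, h⟩)
    · exact Or.inl h
    · exact Or.inr ⟨rfl, by split_ifs at h <;> omega⟩
  · rintro (h | ⟨rfl, h⟩)
    · exact Or.inl h
    · exact Or.inr ⟨rfl, by split_ifs <;> omega⟩

lemma ekKey_pairEnc_lt_iff (hk : 0 < k) {a a' u u' p p' t t' : ℤ} (ha : a ≠ 0)
    (ha' : a' ≠ 0) (hu : u ≠ 0) (hu' : u' ≠ 0) (huk : |u| ≤ k) (hu'k : |u'| ≤ k)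
    (ht : t < t' ↔ ekKey u p < ekKey u' p') (ht' : t' < t ↔ ekKey u' p' < ekKey u p) :
    ekKey (pairEnc k a u) p < ekKey (pairEnc k a' u') p' ↔ ekKey a t < ekKey a' t' := by
  rw [ekKey_lt_ekKey_iff (pairEnc_ne_zero ha hu huk), ekKey_lt_ekKey_iff ha,
    ek_pairEnc_lt_iff ha ha' hu hu' huk hu'k, pairEnc_inj hk ha ha' hu hu' huk hu'k,
    pos_pairEnc_iff ha hu huk, ht, ht', ekKey_lt_ekKey_iff hu, ekKey_lt_ekKey_iff hu']
  have hneg : pairEnc k a u < 0 ↔ ¬(0 < a ↔ 0 < u) := by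
    rw [← pos_pairEnc_iff ha hu huk, not_lt, le_iff_lt_or_eq,
      or_iff_left (pairEnc_ne_zero ha hu huk)]
  rw [hneg]
  by_cases hea : a = a'
  · subst hea
    obtain rfl | hne := eq_or_ne u u'
    · omega
    · simp only [hne, hne.symm, false_and, or_false, and_false]
  · simp only [hea, false_and, or_false]

end Pair

section Partitions

variable {n : ℕ}

def enrichedKey (ρ : Perm (Fin n)) (a : Fin n → ℤ) (i : Fin n) : ℤ ×ₗ ℤ :=
  ekKey (a i) (ρ i : ℕ)

def IsEnrichedPartition (ρ : Perm (Fin n)) (m : ℕ) (a : Fin n → ℤ) : Prop :=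
  (∀ i, a i ≠ 0 ∧ |a i| ≤ m) ∧ StrictMono (enrichedKey ρ a)

lemma enrichedKey_injective {ρ : Perm (Fin n)} {a : Fin n → ℤ} : Injective (enrichedKey ρ a) :=
  fun i j h => ρ.injective (Fin.ext (by exact_mod_cast (ekKey_inj.1 h).2))

lemma enrichedKey_lt_succ_iff {ρ : Perm (Fin n)} {a : Fin n → ℤ} (ha : ∀ i, a i ≠ 0) (s : ℕ)
    (hs : s + 1 < n) :
    enrichedKey ρ a ⟨s, Nat.lt_of_succ_lt hs⟩ < enrichedKey ρ a ⟨s + 1, hs⟩ ↔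
      if ρ ⟨s + 1, hs⟩ < ρ ⟨s, Nat.lt_of_succ_lt hs⟩ then
        ek (a ⟨s, Nat.lt_of_succ_lt hs⟩) < ek (a ⟨s + 1, hs⟩) ∨
          (a ⟨s, Nat.lt_of_succ_lt hs⟩ = a ⟨s + 1, hs⟩ ∧ a ⟨s + 1, hs⟩ < 0)
      else
        ek (a ⟨s, Nat.lt_of_succ_lt hs⟩) < ek (a ⟨s + 1, hs⟩) ∨
          (a ⟨s, Nat.lt_of_succ_lt hs⟩ = a ⟨s + 1, hs⟩ ∧ 0 < a ⟨s + 1, hs⟩) := by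
  have hne : ρ ⟨s + 1, hs⟩ ≠ ρ ⟨s, Nat.lt_of_succ_lt hs⟩ := by simp
  rw [enrichedKey, enrichedKey, ekKey_lt_ekKey_iff (ha _), Fin.ne_iff_vne] at *
  split_ifs with h <;> rw [Fin.lt_def] at h <;> omega

lemma isEnrichedPartition_iff {ρ : Perm (Fin n)} {m : ℕ} {a : Fin n → ℤ} :
    IsEnrichedPartition ρ m a ↔ (∀ s, a s ≠ 0 ∧ |a s| ≤ (m : ℤ)) ∧
    ∀ (s : ℕ) (hs : s + 1 < n),
      if ρ ⟨s + 1, hs⟩ < ρ ⟨s, Nat.lt_of_succ_lt hs⟩ then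
        ek (a ⟨s, Nat.lt_of_succ_lt hs⟩) < ek (a ⟨s + 1, hs⟩) ∨
          (a ⟨s, Nat.lt_of_succ_lt hs⟩ = a ⟨s + 1, hs⟩ ∧ a ⟨s + 1, hs⟩ < 0)
      else
        ek (a ⟨s, Nat.lt_of_succ_lt hs⟩) < ek (a ⟨s + 1, hs⟩) ∨
          (a ⟨s, Nat.lt_of_succ_lt hs⟩ = a ⟨s + 1, hs⟩ ∧ 0 < a ⟨s + 1, hs⟩) := by
  refine and_congr_right fun ha => ?_
  simp_rw [← enrichedKey_lt_succ_iff (fun i => (ha i).1)]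
  cases n with
  | zero => exact ⟨fun _ s hs => absurd hs (by omega), fun _ i => i.elim0⟩
  | succ n =>
    rw [Fin.strictMono_iff_lt_succ]
    exact ⟨fun h s hs => h ⟨s, by omega⟩, fun h i => h i (by omega)⟩

lemma enrichedCount_eq_card (ρ : Perm (Fin n)) (m : ℕ) :
    enrichedCount ρ m = Nat.card {a // IsEnrichedPartition ρ m a} :=
  Nat.card_congr (Equiv.subtypeEquivRight fun _ => isEnrichedPartition_iff.symm)

lemma finite_isEnrichedPartition (ρ : Perm (Fin n)) (m : ℕ) :
    {a | IsEnrichedPartition ρ m a}.Finite :=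
  (Set.Finite.pi' fun _ => Set.finite_Icc (-(m : ℤ)) m).subset fun _ ha i =>
    abs_le.1 (ha.1 i).2

end Partitions

section Standardization

variable {n : ℕ} {α : Type*} [LinearOrder α]

def stdPerm (f : Fin n → α) : Perm (Fin n) := (Tuple.sort f)⁻¹

lemma strictMono_comp_stdPerm_inv {f : Fin n → α} (hf : Injective f) :
    StrictMono (f ∘ ⇑(stdPerm f)⁻¹) := by
  rw [stdPerm, inv_inv]
  exact (Tuple.monotone_sort f).strictMono_of_injective (hf.comp (Tuple.sort f).injective)

lemma stdPerm_eq_of_strictMono {f : Fin n → α} {ρ : Perm (Fin n)} (h : StrictMono (f ∘ ⇑ρ⁻¹)) :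
    stdPerm f = ρ := by
  have hf : Injective f := by
    simpa [Function.comp_assoc] using h.injective.comp ρ.injective
  have := Tuple.unique_monotone (Tuple.monotone_sort f) h.monotone
  rw [stdPerm, inv_eq_iff_eq_inv]
  exact Equiv.ext fun i => congrFun (hf.comp_left this) i

lemma lt_iff_of_strictMono_comp_inv {f : Fin n → α} {ρ : Perm (Fin n)}
    (h : StrictMono (f ∘ ⇑ρ⁻¹)) (i j : Fin n) : ρ i < ρ j ↔ f i < f j := by
  simpa using (h.lt_iff_lt (a := ρ i) (b := ρ j)).symm

end Standardization

section Factorization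

variable {n k : ℕ}

lemma enrichedKey_mul_inv (ρ τ : Perm (Fin n)) (a : Fin n → ℤ) :
    enrichedKey (ρ * τ⁻¹) (a ∘ ⇑τ⁻¹) = enrichedKey ρ a ∘ ⇑τ⁻¹ := rfl

lemma strictMono_enrichedKey_pairEnc_iff (hk : 0 < k) {π τ : Perm (Fin n)} {A U : Fin n → ℤ}
    (hA : ∀ i, A i ≠ 0) (hU : ∀ i, U i ≠ 0 ∧ |U i| ≤ k)
    (hτ : StrictMono (enrichedKey π U ∘ ⇑τ⁻¹)) :
    StrictMono (enrichedKey π fun i => pairEnc k (A i) (U i)) ↔ StrictMono (enrichedKey τ A) := by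
  have hcast : ∀ i j, ((τ i : ℕ) : ℤ) < (τ j : ℕ) ↔ enrichedKey π U i < enrichedKey π U j :=
    fun i j => Nat.cast_lt.trans (lt_iff_of_strictMono_comp_inv hτ i j)
  have key : ∀ i j, enrichedKey π (fun i => pairEnc k (A i) (U i)) i <
      enrichedKey π (fun i => pairEnc k (A i) (U i)) j ↔ enrichedKey τ A i < enrichedKey τ A j :=
    fun i j => ekKey_pairEnc_lt_iff hk (hA i) (hA j) (hU i).1 (hU j).1 (hU i).2 (hU j).2
      (hcast i j) (hcast j i)
  exact ⟨fun h i j hij => (key i j).1 (h hij), fun h i j hij => (key i j).2 (h hij)⟩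

variable (k) in
def splitPerm (π : Perm (Fin n)) (c : Fin n → ℤ) : Perm (Fin n) :=
  stdPerm (enrichedKey π (pairSnd k ∘ c))

variable {l : ℕ} {π τ : Perm (Fin n)} {c : Fin n → ℤ}

lemma isEnrichedPartition_pairSnd (hk : 0 < k) (hτ : splitPerm k π c = τ) :
    IsEnrichedPartition (π * τ⁻¹) k (pairSnd k ∘ c ∘ ⇑τ⁻¹) := by
  refine ⟨fun i => ⟨pairSnd_ne_zero hk _, abs_pairSnd_le hk _⟩, ?_⟩
  rw [← hτ, ← comp_assoc, enrichedKey_mul_inv]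
  exact strictMono_comp_stdPerm_inv enrichedKey_injective

lemma isEnrichedPartition_pairFst (hk : 0 < k) (hc : IsEnrichedPartition π (2 * k * l) c)
    (hτ : splitPerm k π c = τ) : IsEnrichedPartition τ l (pairFst k ∘ c) := by
  refine ⟨fun i => ⟨pairFst_ne_zero hk (hc.1 i).1, abs_pairFst_le hk (hc.1 i).1 ?_⟩, ?_⟩
  · exact_mod_cast (hc.1 i).2
  subst hτ
  refine (strictMono_enrichedKey_pairEnc_iff hk (U := pairSnd k ∘ c)
    (fun i => pairFst_ne_zero hk (hc.1 i).1) (fun i => ⟨pairSnd_ne_zero hk _, abs_pairSnd_le hk _⟩)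
    (strictMono_comp_stdPerm_inv enrichedKey_injective)).1 ?_
  simpa only [comp_apply, pairEnc_pairFst_pairSnd hk (hc.1 _).1] using hc.2

variable {b A : Fin n → ℤ}

lemma strictMono_enrichedKey_comp (hb : StrictMono (enrichedKey (π * τ⁻¹) b)) :
    StrictMono (enrichedKey π (b ∘ τ) ∘ ⇑τ⁻¹) := by
  rwa [← enrichedKey_mul_inv, comp_assoc, ← Perm.coe_mul, mul_inv_cancel, Perm.coe_one, comp_id]

lemma isEnrichedPartition_pairEnc (hk : 0 < k) (hb : IsEnrichedPartition (π * τ⁻¹) k b)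
    (hA : IsEnrichedPartition τ l A) :
    IsEnrichedPartition π (2 * k * l) fun i => pairEnc k (A i) (b (τ i)) :=
  ⟨fun i => ⟨pairEnc_ne_zero (hA.1 i).1 (hb.1 _).1 (hb.1 _).2,
      abs_pairEnc_le (hA.1 i).1 (hA.1 i).2 (hb.1 _).1 (hb.1 _).2⟩,
    (strictMono_enrichedKey_pairEnc_iff hk (U := b ∘ τ) (fun i => (hA.1 i).1) (fun _ => hb.1 _)
      (strictMono_enrichedKey_comp hb.2)).2 hA.2⟩

lemma splitPerm_pairEnc (hk : 0 < k) (hb : IsEnrichedPartition (π * τ⁻¹) k b)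
    (hA : IsEnrichedPartition τ l A) : splitPerm k π (fun i => pairEnc k (A i) (b (τ i))) = τ := by
  have : pairSnd k ∘ (fun i => pairEnc k (A i) (b (τ i))) = b ∘ τ :=
    funext fun i => pairSnd_pairEnc hk (hA.1 i).1 (hb.1 _).1 (hb.1 _).2
  rw [splitPerm, this]
  exact stdPerm_eq_of_strictMono (strictMono_enrichedKey_comp hb.2)

variable (l) in
def splitEquiv (hk : 0 < k) (π τ : Perm (Fin n)) :
    {c : {c // IsEnrichedPartition π (2 * k * l) c} // splitPerm k π c = τ} ≃
      {b // IsEnrichedPartition (π * τ⁻¹) k b} × {A // IsEnrichedPartition τ l A} where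
  toFun c :=
    (⟨_, isEnrichedPartition_pairSnd hk c.2⟩, ⟨_, isEnrichedPartition_pairFst hk c.1.2 c.2⟩)
  invFun bA := ⟨⟨_, isEnrichedPartition_pairEnc hk bA.1.2 bA.2.2⟩,
    splitPerm_pairEnc hk bA.1.2 bA.2.2⟩
  left_inv c := by
    ext i
    simp [pairEnc_pairFst_pairSnd hk (c.1.2.1 i).1]
  right_inv bA := by
    ext i
    · simp [pairSnd_pairEnc hk (bA.2.2.1 _).1 (bA.1.2.1 _).1 (bA.1.2.1 _).2]
    · simp [pairFst_pairEnc hk (bA.2.2.1 _).1 (bA.1.2.1 _).1 (bA.1.2.1 _).2]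

end Factorization

lemma card_isEnrichedPartition_mul {n k : ℕ} (l : ℕ) (hk : 0 < k) (π : Perm (Fin n)) :
    Nat.card {c // IsEnrichedPartition π (2 * k * l) c} =
      ∑ τ, Nat.card {b // IsEnrichedPartition (π * τ⁻¹) k b} *
        Nat.card {A // IsEnrichedPartition τ l A} := by
  have : Finite {c // IsEnrichedPartition π (2 * k * l) c} :=
    (finite_isEnrichedPartition π _).to_subtype
  rw [← Nat.card_congr (Equiv.sigmaFiberEquiv (splitPerm k π ∘ Subtype.val)), Nat.card_sigma]
  exact Finset.sum_congr rfl fun τ _ =>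
    (Nat.card_congr (splitEquiv l hk π τ)).trans (Nat.card_prod _ _)

lemma Finset.sum_filter_mul_eq {G M : Type*} [Group G] [Fintype G] [DecidableEq G] [AddCommMonoid M]
    (f : G × G → M) (g : G) :
    ∑ p ∈ univ.filter (fun p : G × G => p.1 * p.2 = g), f p = ∑ τ, f (g * τ⁻¹, τ) := by
  refine Finset.sum_nbij' Prod.snd (fun τ => (g * τ⁻¹, τ)) (by simp) (by simp) ?_ (by simp) ?_
  all_goals
    rintro ⟨σ, τ⟩ h
    simp [← (Finset.mem_filter.1 h).2]

theorem stmt18_general (n k l : ℕ) (hk : 0 < k) (π : Equiv.Perm (Fin n)) :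
    enrichedCount π (2 * k * l) =
      ∑ p ∈ Finset.univ.filter
          (fun p : Equiv.Perm (Fin n) × Equiv.Perm (Fin n) => p.1 * p.2 = π),
        enrichedCount p.1 k * enrichedCount p.2 l := by
  simp only [enrichedCount_eq_card]
  rw [card_isEnrichedPartition_mul l hk, Finset.sum_filter_mul_eq]

theorem stmt18 (n k l : ℕ) (hk : 0 < k) (hl : 0 < l) (π : Equiv.Perm (Fin n)) :
    enrichedCount π (2 * k * l) =
      ∑ p ∈ Finset.univ.filter
          (fun p : Equiv.Perm (Fin n) × Equiv.Perm (Fin n) => p.1 * p.2 = π),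
        enrichedCount p.1 k * enrichedCount p.2 l :=
  stmt18_general n k l hk π
end
end

section
/- For any permutation π of [n] and positive integers k, l, the left enriched order polynomials satisfy Ω^{(ℓ)}(π; 2kl + k + l) = Σ_{στ = π} Ω^{(ℓ)}(σ; k)·Ω^{(ℓ)}(τ; l). -/
open scoped Classical

noncomputable section

/-!
Rank the parts `0 < -1 < 1 < -2 < ⋯ < k` of `[k]^{(ℓ)}` as `0, 1, …, 2k`; this ranking is
`Equiv.intEquivNat`. Read on values rather than positions, a left enriched `π`-partition becomes
a function `g : [n] → {0, …, 2k}` whose standardization is `π`, where ties are broken by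
increasing position for even entries (parts `≥ 0`) and decreasing position for odd ones.

For `g` into `2k + 1` letters and `h` into `2l + 1` letters, write `h` along the
standardization `σ` of `g` and glue it to `g` in boustrophedon order: the letter
`(h (σ⁻¹ x), g x)` becomes `b (2k+1) + a` if `b = h (σ⁻¹ x)` is even and
`b (2k+1) + (2k - a)` if it is odd. Because `2k + 1` is odd, the glued entry has the parity
of `a + b`, so its ties are broken exactly as the standardizations of `h` and then `g`
prescribe. Hence this bijection onto functions into `(2k+1)(2l+1) = 2(2kl+k+l) + 1` letters
multiplies standardizations, and counting by fibres gives the identity.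
-/

namespace LeftEnriched

open Equiv

variable {n : ℕ}

def tieKey (c x : ℕ) : ℕ ×ₗ ℤ := toLex (c, if Even c then (x : ℤ) else -x)

lemma tieKey_lt_tieKey {c c' x y : ℕ} :
    tieKey c x < tieKey c' y ↔ c < c' ∨ c = c' ∧ if Even c then x < y else y < x := by
  simp only [tieKey, Prod.Lex.toLex_lt_toLex, Nat.even_iff]
  split_ifs <;> omega

lemma tieKey_inj {c c' x y : ℕ} : tieKey c x = tieKey c' y ↔ c = c' ∧ x = y := by
  simp only [tieKey, toLex_inj, Prod.mk.injEq, Nat.even_iff]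
  split_ifs <;> omega

def std (g : Fin n → ℕ) : Perm (Fin n) := Tuple.sort fun i => tieKey (g i) i

lemma std_eq_iff {g : Fin n → ℕ} {π : Perm (Fin n)} :
    std g = π ↔ StrictMono fun i => tieKey (g (π i)) (π i) := by
  have hinj : Function.Injective fun i : Fin n => tieKey (g i) i :=
    fun i j h => Fin.ext (tieKey_inj.1 h).2
  constructor
  · rintro rfl
    exact (Tuple.monotone_sort _).strictMono_of_injective (hinj.comp (Equiv.injective _))
  · intro h
    exact (Tuple.eq_sort_iff.2 ⟨h.monotone, fun i j hij heq => absurd heq (h hij).ne⟩).symm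

lemma strictMono_std (g : Fin n → ℕ) : StrictMono fun i => tieKey (g (std g i)) (std g i) :=
  std_eq_iff.1 rfl

lemma intEquivNat_eq_el (a : ℤ) : (intEquivNat a : ℤ) = el a := by
  rcases a with m | m
  · change ((2 * m : ℕ) : ℤ) = el m
    unfold el
    split_ifs <;> omega
  · change ((2 * m + 1 : ℕ) : ℤ) = el (Int.negSucc m)
    simp only [el, Int.negSucc_lt_zero, not_lt_of_gt, if_false, Int.negSucc_ne_zero]
    omega

lemma el_lt_el_iff {a b : ℤ} : el a < el b ↔ intEquivNat a < intEquivNat b := by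
  rw [← intEquivNat_eq_el, ← intEquivNat_eq_el, Nat.cast_lt]

lemma even_intEquivNat_iff {a : ℤ} : Even (intEquivNat a) ↔ 0 ≤ a := by
  have h := intEquivNat_eq_el a
  rw [Nat.even_iff]
  unfold el at h
  split_ifs at h <;> omega

lemma intEquivNat_lt_iff {a : ℤ} {m : ℕ} : intEquivNat a < 2 * m + 1 ↔ |a| ≤ m := by
  have h := intEquivNat_eq_el a
  rw [abs_le]
  unfold el at h
  split_ifs at h <;> omega

lemma leftStep_iff_tieKey_lt {a b : ℤ} {x y : ℕ} (hxy : x ≠ y) :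
    (if y < x then el a < el b ∨ a = b ∧ b < 0 else el a < el b ∨ a = b ∧ 0 ≤ b) ↔
      tieKey (intEquivNat a) x < tieKey (intEquivNat b) y := by
  simp only [tieKey_lt_tieKey, el_lt_el_iff, intEquivNat.apply_eq_iff_eq, even_intEquivNat_iff]
  split_ifs <;> omega

lemma _root_.Fin.strictMono_iff_lt_add_one {α : Type*} [Preorder α] {f : Fin n → α} :
    StrictMono f ↔
      ∀ (s : ℕ) (hs : s + 1 < n), f ⟨s, Nat.lt_of_succ_lt hs⟩ < f ⟨s + 1, hs⟩ := by
  rcases n with _ | n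
  · simp [Subsingleton.strictMono]
  · rw [Fin.strictMono_iff_lt_succ]
    exact ⟨fun h s hs => h ⟨s, by omega⟩, fun h i => h i (by omega)⟩

lemma leftEnriched_iff_strictMono (π : Perm (Fin n)) (a : Fin n → ℤ) :
    (∀ (s : ℕ) (hs : s + 1 < n),
      if π ⟨s + 1, hs⟩ < π ⟨s, Nat.lt_of_succ_lt hs⟩ then
        el (a ⟨s, Nat.lt_of_succ_lt hs⟩) < el (a ⟨s + 1, hs⟩) ∨
          (a ⟨s, Nat.lt_of_succ_lt hs⟩ = a ⟨s + 1, hs⟩ ∧ a ⟨s + 1, hs⟩ < 0)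
      else
        el (a ⟨s, Nat.lt_of_succ_lt hs⟩) < el (a ⟨s + 1, hs⟩) ∨
          (a ⟨s, Nat.lt_of_succ_lt hs⟩ = a ⟨s + 1, hs⟩ ∧ 0 ≤ a ⟨s + 1, hs⟩)) ↔
      StrictMono fun i => tieKey (intEquivNat (a i)) (π i) := by
  rw [Fin.strictMono_iff_lt_add_one]
  refine forall₂_congr fun s hs => leftStep_iff_tieKey_lt fun h => ?_
  have := π.injective (Fin.ext h)
  simp [Fin.ext_iff] at this

theorem leftEnrichedCount_eq_card_std (π : Perm (Fin n)) (m : ℕ) :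
    leftEnrichedCount π m =
      Nat.card {g : Fin n → Fin (2 * m + 1) // std (Fin.val ∘ g) = π} := by
  refine Nat.card_congr
    { toFun := fun a =>
        ⟨fun x => ⟨intEquivNat (a.1 (π⁻¹ x)), intEquivNat_lt_iff.2 (a.2.1 _)⟩, ?_⟩
      invFun := fun g => ⟨fun i => intEquivNat.symm (g.1 (π i)), fun i => ?_, ?_⟩
      left_inv := fun a => by ext; simp
      right_inv := fun g => by ext; simp }
  · rw [std_eq_iff]
    simpa using (leftEnriched_iff_strictMono π a.1).1 a.2.2
  · exact intEquivNat_lt_iff.1 (by simpa using (g.1 (π i)).isLt)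
  · refine (leftEnriched_iff_strictMono π fun i => intEquivNat.symm (g.1 (π i))).2 ?_
    simpa [std_eq_iff] using g.2

def zigzag (K b a : ℕ) : ℕ := b * K + if Even b then a else K - 1 - a

lemma zigzag_lt_zigzag {K a a' b b' : ℕ} (ha : a < K) (hb : b < b') :
    zigzag K b a < zigzag K b' a' := by
  have : (b + 1) * K ≤ b' * K := Nat.mul_le_mul_right K hb
  unfold zigzag
  split_ifs <;> rw [Nat.succ_mul] at this <;> omega

lemma tieKey_zigzag_lt_iff {K a a' b b' x y : ℕ} (hK : Odd K) (ha : a < K) (ha' : a' < K) :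
    tieKey (zigzag K b a) x < tieKey (zigzag K b' a') y ↔
      b < b' ∨
        b = b' ∧ if Even b then tieKey a x < tieKey a' y else tieKey a' y < tieKey a x := by
  rcases lt_trichotomy b b' with hb | rfl | hb
  · simp [hb, tieKey_lt_tieKey, zigzag_lt_zigzag (a' := a') ha hb]
  · have hK2 := Nat.odd_iff.1 hK
    have hpar : (b * K) % 2 = b % 2 := by
      rw [Nat.mul_mod, hK2, mul_one, Nat.mod_mod]
    simp only [tieKey_lt_tieKey, zigzag, Nat.even_iff, lt_irrefl, true_and, false_or]
    generalize b * K = M at hpar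
    split_ifs <;> omega
  · have := zigzag_lt_zigzag (K := K) (a' := a) ha' hb
    simp [tieKey_lt_tieKey, hb.ne', hb.not_gt, this.ne', this.not_gt]

def zigzagEquiv (L K : ℕ) : Fin L × Fin K ≃ Fin (L * K) :=
  (prodShear (Equiv.refl (Fin L)) fun b =>
    if Even (b : ℕ) then Equiv.refl _ else Fin.revPerm).trans finProdFinEquiv

lemma zigzagEquiv_val {L K : ℕ} (p : Fin L × Fin K) :
    (zigzagEquiv L K p : ℕ) = zigzag K p.1 p.2 := by
  have := p.2.isLt
  simp only [zigzagEquiv, zigzag, trans_apply, prodShear_apply, coe_refl, id_eq]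
  split_ifs <;> simp [finProdFinEquiv, Nat.mul_comm K] <;> omega

def reindexProdEquiv {ι α β γ : Type*} (S : (ι → β) → Perm ι) (e : α × β ≃ γ) :
    (ι → β) × (ι → α) ≃ (ι → γ) where
  toFun p x := e (p.2 ((S p.1)⁻¹ x), p.1 x)
  invFun f :=
    (fun x => (e.symm (f x)).2, fun y => (e.symm (f (S (fun x => (e.symm (f x)).2) y))).1)
  left_inv p := by simp
  right_inv f := by ext x; simp

theorem std_reindexProdEquiv_zigzag {K L : ℕ} (hK : Odd K) (g : Fin n → Fin K)
    (h : Fin n → Fin L) :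
    std (Fin.val ∘ reindexProdEquiv (std <| Fin.val ∘ ·) (zigzagEquiv L K) (g, h)) =
      std (Fin.val ∘ g) * std (Fin.val ∘ h) := by
  have hσ := strictMono_std (Fin.val ∘ g)
  have hτ := strictMono_std (Fin.val ∘ h)
  simp only [Function.comp_apply] at hσ hτ
  refine std_eq_iff.2 fun i j hij => ?_
  simp only [reindexProdEquiv, coe_fn_mk, Function.comp_apply, Perm.mul_apply,
    Perm.inv_def, symm_apply_apply, zigzagEquiv_val]
  rw [tieKey_zigzag_lt_iff hK (g _).isLt (g _).isLt]
  rcases tieKey_lt_tieKey.1 (hτ hij) with hlt | ⟨heq, htie⟩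
  · exact Or.inl hlt
  · refine Or.inr ⟨heq, ?_⟩
    split_ifs at htie ⊢ <;> exact hσ htie

open Finset in
lemma card_subtype_mul_eq_sum {G A B : Type*} [Mul G] [Fintype G] [DecidableEq G]
    [Finite A] [Finite B]
    (sA : A → G) (sB : B → G) (π : G) :
    Nat.card {p : A × B // sA p.1 * sB p.2 = π} =
      ∑ q ∈ univ.filter (fun q : G × G => q.1 * q.2 = π),
        Nat.card {a // sA a = q.1} * Nat.card {b // sB b = q.2} := by
  have := Fintype.ofFinite A
  have := Fintype.ofFinite B
  simp only [Nat.card_eq_fintype_card, Fintype.card_subtype]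
  rw [card_eq_sum_card_fiberwise (f := fun p => (sA p.1, sB p.2))
    (t := univ.filter fun q : G × G => q.1 * q.2 = π) (fun p hp => by simpa using hp)]
  refine sum_congr rfl fun q hq => ?_
  rw [← card_product]
  congr 1
  ext ⟨a, b⟩
  simp only [mem_filter, mem_univ, true_and, mem_product, Prod.ext_iff] at hq ⊢
  constructor
  · exact fun h => h.2
  · rintro ⟨ha, hb⟩
    exact ⟨by rwa [ha, hb], ha, hb⟩

end LeftEnriched

open LeftEnriched in
theorem stmt19_general (n k l : ℕ) (π : Equiv.Perm (Fin n)) :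
    leftEnrichedCount π (2 * k * l + k + l) =
      ∑ p ∈ Finset.univ.filter
          (fun p : Equiv.Perm (Fin n) × Equiv.Perm (Fin n) => p.1 * p.2 = π),
        leftEnrichedCount p.1 k * leftEnrichedCount p.2 l := by
  have hN : 2 * (2 * k * l + k + l) + 1 = (2 * l + 1) * (2 * k + 1) := by ring
  rw [leftEnrichedCount_eq_card_std, hN]
  simp only [leftEnrichedCount_eq_card_std]
  rw [← card_subtype_mul_eq_sum (fun g : Fin n → Fin (2 * k + 1) => std (Fin.val ∘ g))
    (fun h : Fin n → Fin (2 * l + 1) => std (Fin.val ∘ h))]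
  refine Nat.card_congr ((reindexProdEquiv (std <| Fin.val ∘ ·) (zigzagEquiv _ _)).subtypeEquiv
    fun p => ?_).symm
  rw [std_reindexProdEquiv_zigzag (odd_two_mul_add_one k)]

theorem stmt19 (n k l : ℕ) (hk : 0 < k) (hl : 0 < l) (π : Equiv.Perm (Fin n)) :
    leftEnrichedCount π (2 * k * l + k + l) =
      ∑ p ∈ Finset.univ.filter
          (fun p : Equiv.Perm (Fin n) × Equiv.Perm (Fin n) => p.1 * p.2 = π),
        leftEnrichedCount p.1 k * leftEnrichedCount p.2 l :=
  stmt19_general n k l π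
end
end
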